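/- The SO(3)-tangent operator T(ω) := I - (β(ω)/2) ω̃ + ((1 - α(ω))/‖ω‖²) ω̃², where α(ω) = sin‖ω‖/‖ω‖ and β(ω) = 2(1 - cos‖ω‖)/‖ω‖², and the matrix T⁻¹(ω) := I + (1/2) ω̃ + ((1 - γ(ω))/‖ω‖²) ω̃² with γ(ω) = (‖ω‖/2) cot(‖ω‖/2), satisfy T(ω) T⁻¹(ω) = I for all ω with 0 < ‖ω‖ < 2π. -/

import Mathlib

open Matrix Real

noncomputable def norm3 (ω : Fin 3 → ℝ) : ℝ := Real.sqrt (ω 0 ^ 2 + ω 1 ^ 2 + ω 2 ^ 2)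

def skew (ω : Fin 3 → ℝ) : Matrix (Fin 3) (Fin 3) ℝ :=
  !![0, -ω 2, ω 1; ω 2, 0, -ω 0; -ω 1, ω 0, 0]


noncomputable def Tso (ω : Fin 3 → ℝ) : Matrix (Fin 3) (Fin 3) ℝ :=
  1 - (2 * (1 - Real.cos (norm3 ω)) / norm3 ω ^ 2 / 2) • skew ω
    + ((1 - Real.sin (norm3 ω) / norm3 ω) / norm3 ω ^ 2) • (skew ω ^ 2)


noncomputable def Tinv (ω : Fin 3 → ℝ) : Matrix (Fin 3) (Fin 3) ℝ :=
  1 + (1 / 2 : ℝ) • skew ω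
    + ((1 - norm3 ω / 2 * Real.cot (norm3 ω / 2)) / norm3 ω ^ 2) • (skew ω ^ 2)

/-! Since `ω̃³ = -‖ω‖² ω̃` (Cayley–Hamilton for a skew matrix), both factors lie in the
commutative algebra spanned by `1, ω̃, ω̃²`, and their product has the coefficients given by
`mul_eq_of_pow_three_eq_neg_smul`. Writing `cot (θ/2) = sin θ / (1 - cos θ)`, the coefficients of
`ω̃` and `ω̃²` become rational expressions in `θ = ‖ω‖, sin θ, cos θ` that vanish identically,
the second one by `sin² θ + cos² θ = 1`. -/

theorem mul_eq_of_pow_three_eq_neg_smul {R A : Type*} [CommRing R] [Ring A] [Algebra R A]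
    {S : A} {t : R} (hS : S ^ 3 = -t • S) (a b c d : R) :
    (1 + a • S + b • S ^ 2) * (1 + c • S + d • S ^ 2) =
      1 + (a + c - t * (a * d + b * c)) • S + (b + d + a * c - t * (b * d)) • S ^ 2 := by
  have hS2 : S * S = S ^ 2 := (sq S).symm
  have hS3 : S * S ^ 2 = -t • S := by rw [← pow_succ', hS]
  have hS3' : S ^ 2 * S = -t • S := by rw [← pow_succ, hS]
  have hS4 : S ^ 2 * S ^ 2 = -t • S ^ 2 := by rw [← pow_add, pow_succ, hS, smul_mul_assoc, hS2]
  simp only [mul_add, add_mul, mul_one, one_mul, smul_mul_smul_comm, hS2, hS3, hS3', hS4,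
    smul_smul]
  module

theorem norm3_sq (ω : Fin 3 → ℝ) : norm3 ω ^ 2 = ω 0 ^ 2 + ω 1 ^ 2 + ω 2 ^ 2 :=
  Real.sq_sqrt (by positivity)

theorem skew_pow_three (ω : Fin 3 → ℝ) : skew ω ^ 3 = -(norm3 ω ^ 2) • skew ω := by
  rw [norm3_sq, pow_succ, sq]
  ext i j
  fin_cases i <;> fin_cases j <;> simp [skew, Matrix.mul_apply, Fin.sum_univ_three] <;> ring

namespace Real

theorem one_sub_cos_eq_two_mul_sin_half_sq (x : ℝ) : 1 - cos x = 2 * sin (x / 2) ^ 2 := by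
  rw [sin_sq_eq_half_sub, mul_div_cancel₀ x two_ne_zero]
  ring

theorem cot_half_eq_sin_div_one_sub_cos {x : ℝ} (hx : sin (x / 2) ≠ 0) :
    cot (x / 2) = sin x / (1 - cos x) := by
  have hsin : sin x = 2 * sin (x / 2) * cos (x / 2) := by
    rw [← sin_two_mul, mul_div_cancel₀ x two_ne_zero]
  rw [cot_eq_cos_div_sin, hsin, one_sub_cos_eq_two_mul_sin_half_sq]
  field_simp

end Real

theorem tangent_coeff_skew_eq_zero {x : ℝ} (hx : x ≠ 0) (hsin : sin (x / 2) ≠ 0) :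
    -(2 * (1 - cos x) / x ^ 2 / 2) + 1 / 2 -
      x ^ 2 * (-(2 * (1 - cos x) / x ^ 2 / 2) * ((1 - x / 2 * cot (x / 2)) / x ^ 2) +
        (1 - sin x / x) / x ^ 2 * (1 / 2)) = 0 := by
  have hcos : 1 - cos x ≠ 0 := by rw [one_sub_cos_eq_two_mul_sin_half_sq]; positivity
  rw [cot_half_eq_sin_div_one_sub_cos hsin]
  field_simp
  ring

theorem tangent_coeff_skew_sq_eq_zero {x : ℝ} (hx : x ≠ 0) (hsin : sin (x / 2) ≠ 0) :
    (1 - sin x / x) / x ^ 2 + (1 - x / 2 * cot (x / 2)) / x ^ 2 +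
        -(2 * (1 - cos x) / x ^ 2 / 2) * (1 / 2) -
      x ^ 2 * ((1 - sin x / x) / x ^ 2 * ((1 - x / 2 * cot (x / 2)) / x ^ 2)) = 0 := by
  have hcos : 1 - cos x ≠ 0 := by rw [one_sub_cos_eq_two_mul_sin_half_sq]; positivity
  rw [cot_half_eq_sin_div_one_sub_cos hsin]
  field_simp
  linear_combination (-x) * sin_sq_add_cos_sq x

theorem tangent_mul_inv (ω : Fin 3 → ℝ) (h0 : 0 < norm3 ω) (h2 : norm3 ω < 2 * Real.pi) :
    Tso ω * Tinv ω = 1 := by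
  have hsin : sin (norm3 ω / 2) ≠ 0 := (sin_pos_of_pos_of_lt_pi (by positivity) (by linarith)).ne'
  rw [Tso, Tinv, sub_eq_add_neg, ← neg_smul,
    mul_eq_of_pow_three_eq_neg_smul (skew_pow_three ω),
    tangent_coeff_skew_eq_zero h0.ne' hsin, tangent_coeff_skew_sq_eq_zero h0.ne' hsin,
    zero_smul, zero_smul, add_zero, add_zero]
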